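/- arXiv:2012.03137 — 4 statements merged into one kernel-verified Lean document; each statement's English description precedes it below -/
import Mathlib

section
/- Let φ be the Laplace transform of an almost surely positive random variable M, let E₁, …, E_d be i.i.d. Exp(1) random variables independent of M, and set U_i = φ(E_i/M). Then each U_i is uniformly distributed on [0, 1]. -/
/-!
Conditionally on `M = m > 0`, the event `t < E_i / M` is `t m < E_i`, of probability `exp (-t m)`;
integrating over the law of `M` (independent of `E_i`) shows that the survival function of
`E_i / M` is `φ` on `[0, ∞)`. As `φ` is continuous and strictly decreasing from `1` to `0` there,
`φ (E_i / M)` is uniform on `[0, 1]` by the probability integral transform.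
-/

open MeasureTheory ProbabilityTheory Set Filter Topology

lemma expMeasure_Ioi {r x : ℝ} (hr : 0 < r) (hx : 0 ≤ x) :
    expMeasure r (Ioi x) = ENNReal.ofReal (Real.exp (-(r * x))) := by
  have := isProbabilityMeasure_expMeasure hr
  rw [← compl_Iic, prob_compl_eq_one_sub measurableSet_Iic, ← ofReal_cdf, cdf_expMeasure_eq hr,
    if_pos hx, ← ENNReal.ofReal_one, ← ENNReal.ofReal_sub _
    (sub_nonneg.2 (Real.exp_le_one_iff.2 (neg_nonpos.2 (mul_nonneg hr.le hx))))]
  norm_num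

lemma integral_lt_integral_of_ae_lt {α : Type*} [MeasurableSpace α] {μ : Measure α} [NeZero μ]
    {f g : α → ℝ} (hf : Integrable f μ) (hg : Integrable g μ) (hfg : ∀ᵐ x ∂μ, f x < g x) :
    ∫ x, f x ∂μ < ∫ x, g x ∂μ := by
  have hpos : 0 < ∫ x, (g x - f x) ∂μ := by
    refine (integral_pos_iff_support_of_nonneg_ae ?_ (hg.sub hf)).2 (pos_iff_ne_zero.2 fun h0 => ?_)
    · filter_upwards [hfg] with x hx using sub_nonneg.2 hx.le
    · obtain ⟨x, hx, hx0⟩ := (hfg.and (measure_eq_zero_iff_ae_notMem.1 h0)).exists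
      exact hx0 (sub_ne_zero.2 hx.ne')
  rw [integral_sub hg hf] at hpos
  linarith

lemma norm_exp_neg_mul_le_one {t m : ℝ} (ht : 0 ≤ t) (hm : 0 ≤ m) : ‖Real.exp (-t * m)‖ ≤ 1 := by
  rw [Real.norm_eq_abs, abs_of_pos (Real.exp_pos _), Real.exp_le_one_iff]
  nlinarith

section Laplace

variable {Ω : Type*} [MeasurableSpace Ω] {μ : Measure Ω} {M : Ω → ℝ}

noncomputable def laplace (μ : Measure Ω) (M : Ω → ℝ) (t : ℝ) : ℝ :=
  ∫ ω, Real.exp (-t * M ω) ∂μ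

lemma laplace_zero [IsProbabilityMeasure μ] : laplace μ M 0 = 1 := by
  simp [laplace]

lemma aestronglyMeasurable_exp_neg_mul (hM : AEMeasurable M μ) (t : ℝ) :
    AEStronglyMeasurable (fun ω => Real.exp (-t * M ω)) μ :=
  (Real.measurable_exp.comp_aemeasurable (hM.const_mul (-t))).aestronglyMeasurable

lemma integrable_exp_neg_mul [IsFiniteMeasure μ] (hM : AEMeasurable M μ)
    (hM0 : ∀ᵐ ω ∂μ, 0 ≤ M ω) {t : ℝ} (ht : 0 ≤ t) :
    Integrable (fun ω => Real.exp (-t * M ω)) μ :=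
  (integrable_const 1).mono' (aestronglyMeasurable_exp_neg_mul hM t)
    (hM0.mono fun _ hω => norm_exp_neg_mul_le_one ht hω)

lemma continuousOn_laplace [IsFiniteMeasure μ] (hM : AEMeasurable M μ)
    (hM0 : ∀ᵐ ω ∂μ, 0 ≤ M ω) : ContinuousOn (laplace μ M) (Ici 0) :=
  continuousOn_of_dominated (fun t _ => aestronglyMeasurable_exp_neg_mul hM t)
    (fun _ ht => hM0.mono fun _ hω => norm_exp_neg_mul_le_one ht hω) (integrable_const 1)
    (ae_of_all _ fun _ => by fun_prop)

lemma tendsto_laplace_atTop [IsFiniteMeasure μ] (hM : AEMeasurable M μ)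
    (hMpos : ∀ᵐ ω ∂μ, 0 < M ω) : Tendsto (laplace μ M) atTop (𝓝 0) := by
  have h0 : (0 : ℝ) = ∫ _, (0 : ℝ) ∂μ := by simp
  rw [h0]
  refine tendsto_integral_filter_of_dominated_convergence (fun _ => 1)
    (Eventually.of_forall fun t => aestronglyMeasurable_exp_neg_mul hM t) ?_ (integrable_const 1) ?_
  · filter_upwards [eventually_ge_atTop 0] with t ht
    filter_upwards [hMpos] with ω hω using norm_exp_neg_mul_le_one ht hω.le
  · filter_upwards [hMpos] with ω hω
    refine Real.tendsto_exp_atBot.comp ?_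
    simp only [neg_mul]
    exact tendsto_neg_atTop_atBot.comp (tendsto_id.atTop_mul_const hω)

lemma strictAntiOn_laplace [IsFiniteMeasure μ] [NeZero μ] (hM : AEMeasurable M μ)
    (hMpos : ∀ᵐ ω ∂μ, 0 < M ω) : StrictAntiOn (laplace μ M) (Ici 0) := by
  intro s hs r hr hsr
  have hM0 : ∀ᵐ ω ∂μ, 0 ≤ M ω := hMpos.mono fun _ hω => hω.le
  refine integral_lt_integral_of_ae_lt (integrable_exp_neg_mul hM hM0 hr)
    (integrable_exp_neg_mul hM hM0 hs) ?_
  filter_upwards [hMpos] with ω hω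
  exact Real.exp_lt_exp.2 (by nlinarith)

lemma measure_lt_div_eq_laplace [IsProbabilityMeasure μ] (hM : Measurable M)
    (hMpos : ∀ᵐ ω ∂μ, 0 < M ω) {X : Ω → ℝ} (hX : Measurable X)
    (hXdist : μ.map X = expMeasure 1) (hXM : IndepFun X M μ) {t : ℝ} (ht : 0 ≤ t) :
    μ {ω | t < X ω / M ω} = ENNReal.ofReal (laplace μ M t) := by
  have := isProbabilityMeasure_expMeasure one_pos
  have hjoint : μ.map (fun ω => (M ω, X ω)) = (μ.map M).prod (expMeasure 1) := by
    rw [← hXdist]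
    exact (indepFun_iff_map_prod_eq_prod_map_map hM.aemeasurable hX.aemeasurable).1 hXM.symm
  have hs : MeasurableSet {p : ℝ × ℝ | t < p.2 / p.1} :=
    measurableSet_lt measurable_const (measurable_snd.div measurable_fst)
  have hsection : ∀ᵐ m ∂(μ.map M), expMeasure 1 (Prod.mk m ⁻¹' {p : ℝ × ℝ | t < p.2 / p.1})
      = ENNReal.ofReal (Real.exp (-t * m)) := by
    filter_upwards [(ae_map_iff hM.aemeasurable measurableSet_Ioi).2 hMpos] with m hm
    have : Prod.mk m ⁻¹' {p : ℝ × ℝ | t < p.2 / p.1} = Ioi (t * m) := by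
      ext x
      simp [lt_div_iff₀ (show (0 : ℝ) < m from hm)]
    rw [this, expMeasure_Ioi one_pos (mul_nonneg ht (le_of_lt hm)), one_mul, neg_mul]
  have hM0 : ∀ᵐ ω ∂μ, 0 ≤ M ω := hMpos.mono fun _ hω => hω.le
  calc μ {ω | t < X ω / M ω}
      = ((μ.map M).prod (expMeasure 1)) {p : ℝ × ℝ | t < p.2 / p.1} := by
        rw [← hjoint, Measure.map_apply (hM.prodMk hX) hs]
        rfl
    _ = ∫⁻ m, ENNReal.ofReal (Real.exp (-t * m)) ∂(μ.map M) := by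
        rw [Measure.prod_apply hs]
        exact lintegral_congr_ae hsection
    _ = ENNReal.ofReal (laplace μ M t) := by
        rw [lintegral_map (by fun_prop) hM, laplace, ofReal_integral_eq_lintegral_ofReal
          (integrable_exp_neg_mul hM.aemeasurable hM0 ht)
          (ae_of_all _ fun _ => (Real.exp_pos _).le)]

end Laplace

section SurvivalTransform

variable {Ω : Type*} [MeasurableSpace Ω] {μ : Measure Ω} {Y : Ω → ℝ} {S : ℝ → ℝ}

lemma AntitoneOn.le_of_tendsto_atTop {a l t : ℝ} (hS : AntitoneOn S (Ici a))
    (hlim : Tendsto S atTop (𝓝 l)) (ht : a ≤ t) : l ≤ S t :=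
  le_of_tendsto hlim <| (eventually_ge_atTop t).mono fun _ hs => hS ht (ht.trans hs) hs

lemma measure_preimage_Iio_eq_volume_inter_Icc [IsProbabilityMeasure μ]
    (hYpos : ∀ᵐ ω ∂μ, 0 < Y ω) (hSc : ContinuousOn S (Ici 0)) (hSa : StrictAntiOn S (Ici 0))
    (hS0 : S 0 = 1) (hStop : Tendsto S atTop (𝓝 0))
    (hYS : ∀ t, 0 ≤ t → μ {ω | t < Y ω} = ENNReal.ofReal (S t)) (u : ℝ) :
    μ ((fun ω => S (Y ω)) ⁻¹' Iio u) = volume (Iio u ∩ Icc 0 1) := by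
  rcases le_or_gt u 0 with hu0 | hu0
  · have hempty : Iio u ∩ Icc 0 1 = ∅ :=
      eq_empty_of_forall_notMem fun x hx => (hx.1.trans_le hu0).not_ge hx.2.1
    rw [hempty, measure_empty, measure_eq_zero_iff_ae_notMem]
    filter_upwards [hYpos] with ω hω
    exact not_lt.2 (hu0.trans (hSa.antitoneOn.le_of_tendsto_atTop hStop hω.le))
  rcases le_or_gt u 1 with hu1 | hu1
  · obtain ⟨T, hTu, hT0⟩ : ∃ T, S T < u ∧ 0 ≤ T :=
      ((hStop.eventually_lt_const hu0).and (eventually_ge_atTop 0)).exists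
    obtain ⟨t, ht, rfl⟩ : ∃ t ∈ Icc 0 T, S t = u :=
      intermediate_value_Icc' hT0 (hSc.mono Icc_subset_Ici_self) ⟨hTu.le, hS0 ▸ hu1⟩
    have hpre : (fun ω => S (Y ω)) ⁻¹' Iio (S t) =ᵐ[μ] {ω | t < Y ω} := by
      filter_upwards [hYpos] with ω hω
      exact propext (hSa.lt_iff_gt hω.le ht.1)
    have hIco : Iio (S t) ∩ Icc 0 1 = Ico 0 (S t) := by
      ext x
      simp only [mem_inter_iff, mem_Iio, mem_Icc, mem_Ico]
      constructor
      · rintro ⟨hxt, hx0, -⟩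
        exact ⟨hx0, hxt⟩
      · rintro ⟨hx0, hxt⟩
        exact ⟨hxt, hx0, hxt.le.trans hu1⟩
    rw [measure_congr hpre, hYS t ht.1, hIco, Real.volume_Ico, sub_zero]
  · have huniv : (fun ω => S (Y ω)) ⁻¹' Iio u =ᵐ[μ] univ := by
      filter_upwards [hYpos] with ω hω
      exact eq_true ((hS0 ▸ hSa.antitoneOn self_mem_Ici hω.le hω.le).trans_lt hu1)
    rw [measure_congr huniv, measure_univ, inter_eq_right.2 fun x hx => hx.2.trans_lt hu1,
      Real.volume_Icc, sub_zero, ENNReal.ofReal_one]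

theorem map_survival_eq_volume_restrict_Icc [IsProbabilityMeasure μ] (hY : Measurable Y)
    (hSc : ContinuousOn S (Ici 0)) (hSa : StrictAntiOn S (Ici 0)) (hS0 : S 0 = 1)
    (hStop : Tendsto S atTop (𝓝 0)) (hYS : ∀ t, 0 ≤ t → μ {ω | t < Y ω} = ENNReal.ofReal (S t)) :
    μ.map (fun ω => S (Y ω)) = volume.restrict (Icc 0 1) := by
  have hYpos : ∀ᵐ ω ∂μ, 0 < Y ω :=
    (ae_iff_prob_eq_one (measurableSet_setOfPred.1 (measurableSet_lt measurable_const hY))).2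
      (by simpa [hS0] using hYS 0 le_rfl)
  have hmeas : AEMeasurable (fun ω => S (Y ω)) μ := by
    have hSext : Continuous fun s => S (max s 0) :=
      hSc.comp_continuous (by fun_prop) fun s => le_max_right s 0
    refine (hSext.measurable.comp hY).aemeasurable.congr ?_
    filter_upwards [hYpos] with ω hω
    simp [max_eq_left hω.le]
  have := Measure.isProbabilityMeasure_map hmeas
  refine ext_of_generate_finite _ (borel_eq_generateFrom_Iio ℝ) isPiSystem_Iio ?_ (by simp)
  rintro _ ⟨u, rfl⟩
  rw [Measure.map_apply_of_aemeasurable hmeas measurableSet_Iio,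
    Measure.restrict_apply measurableSet_Iio]
  exact measure_preimage_Iio_eq_volume_inter_Icc hYpos hSc hSa hS0 hStop hYS u

end SurvivalTransform

theorem marshall_olkin_marginals_uniform_general
    {Ω : Type*} [MeasurableSpace Ω] (μ : Measure Ω) [IsProbabilityMeasure μ]
    (M : Ω → ℝ) (hM : Measurable M) (hMpos : ∀ᵐ ω ∂μ, 0 < M ω)
    (φ : ℝ → ℝ) (hφ : ∀ t, φ t = ∫ ω, Real.exp (-t * M ω) ∂μ)
    (d : ℕ) (E : Fin d → Ω → ℝ) (hEmeas : ∀ i, Measurable (E i))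
    (hEdist : ∀ i, Measure.map (E i) μ = expMeasure 1)
    (hEM : ∀ i, IndepFun (E i) M μ) :
    ∀ i, Measure.map (fun ω => φ (E i ω / M ω)) μ =
      (volume : Measure ℝ).restrict (Set.Icc 0 1) := by
  intro i
  have hM0 : ∀ᵐ ω ∂μ, 0 ≤ M ω := hMpos.mono fun _ hω => hω.le
  obtain rfl : φ = laplace μ M := funext hφ
  exact map_survival_eq_volume_restrict_Icc ((hEmeas i).div hM)
    (continuousOn_laplace hM.aemeasurable hM0) (strictAntiOn_laplace hM.aemeasurable hMpos)
    laplace_zero (tendsto_laplace_atTop hM.aemeasurable hMpos)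
    fun _ ht => measure_lt_div_eq_laplace hM hMpos (hEmeas i) (hEdist i) (hEM i) ht

/-- Marshall–Olkin sampling: if `φ` is the Laplace transform of an a.s. positive random
variable `M`, and `E₁, …, E_d` are i.i.d. `Exp(1)` random variables, each independent of
`M`, then each `U_i = φ(E_i / M)` is uniformly distributed on `[0, 1]`. -/
theorem marshall_olkin_marginals_uniform
    {Ω : Type*} [MeasurableSpace Ω] (μ : Measure Ω) [IsProbabilityMeasure μ]
    (M : Ω → ℝ) (hM : Measurable M) (hMpos : ∀ᵐ ω ∂μ, 0 < M ω)
    (φ : ℝ → ℝ) (hφ : ∀ t, φ t = ∫ ω, Real.exp (-t * M ω) ∂μ)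
    (d : ℕ) (E : Fin d → Ω → ℝ) (hEmeas : ∀ i, Measurable (E i))
    (hEdist : ∀ i, Measure.map (E i) μ = expMeasure 1)
    (hEindep : iIndepFun E μ)
    (hEM : ∀ i, IndepFun (E i) M μ) :
    ∀ i, Measure.map (fun ω => φ (E i ω / M ω)) μ =
      (volume : Measure ℝ).restrict (Set.Icc 0 1) :=
  marshall_olkin_marginals_uniform_general μ M hM hMpos φ hφ d E hEmeas hEdist hEM
end

section
/- Let φ be the Laplace transform of an almost surely positive random variable M, let E₁, E₂ be i.i.d. Exp(1) independent of M, and U_i = φ(E_i/M). Then the joint distribution function of (U₁, U₂) is P(U₁ ≤ u₁, U₂ ≤ u₂) = φ(φ^{−1}(u₁) + φ^{−1}(u₂)) for u₁, u₂ ∈ (0, 1]. -/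
open MeasureTheory ProbabilityTheory Set Filter
open scoped ENNReal

/-!
Because `φ` is strictly decreasing on `[0, ∞)`, the event `φ(Eᵢ / M) ≤ uᵢ = φ(sᵢ)`,
with `sᵢ = ψ(uᵢ)`, is `sᵢ M ≤ Eᵢ`.
Given `M = m`, these two events are independent with probabilities `e^{-s₁ m}` and `e^{-s₂ m}`,
so integrating against the law of `M` gives `E[e^{-(s₁ + s₂) M}] = φ(s₁ + s₂)`.
-/

section LaplaceTransform

variable {Ω : Type*} [MeasurableSpace Ω] {μ : Measure Ω} {M : Ω → ℝ}

lemma integrable_exp_neg_mul_of_ae_nonneg [IsFiniteMeasure μ] (hM : AEMeasurable M μ)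
    (hM₀ : ∀ᵐ ω ∂μ, 0 ≤ M ω) {t : ℝ} (ht : 0 ≤ t) :
    Integrable (fun ω ↦ Real.exp (-t * M ω)) μ := by
  refine Integrable.of_bound ((hM.const_mul (-t)).exp).aestronglyMeasurable 1 ?_
  filter_upwards [hM₀] with ω hω
  rw [Real.norm_of_nonneg (Real.exp_pos _).le, Real.exp_le_one_iff]
  nlinarith

lemma strictAntiOn_integral_exp_neg_mul [IsFiniteMeasure μ] [NeZero μ] (hM : AEMeasurable M μ)
    (hM₀ : ∀ᵐ ω ∂μ, 0 < M ω) :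
    StrictAntiOn (fun t ↦ ∫ ω, Real.exp (-t * M ω) ∂μ) (Ici 0) := by
  intro a ha b hb hab
  have hint : ∀ t ∈ Ici (0 : ℝ), Integrable (fun ω ↦ Real.exp (-t * M ω)) μ := fun t ht ↦
    integrable_exp_neg_mul_of_ae_nonneg hM (hM₀.mono fun _ h ↦ h.le) ht
  have hlt : ∀ᵐ ω ∂μ, Real.exp (-b * M ω) < Real.exp (-a * M ω) := by
    filter_upwards [hM₀] with ω hω
    exact Real.exp_lt_exp.2 (by nlinarith)
  dsimp only
  rw [← sub_pos, ← integral_sub (hint a ha) (hint b hb),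
    integral_pos_iff_support_of_nonneg_ae (hlt.mono fun _ h ↦ (sub_pos.2 h).le)
      ((hint a ha).sub (hint b hb)), pos_iff_ne_zero, ← frequently_ae_mem_iff]
  exact (hlt.mono fun _ h ↦ (sub_pos.2 h).ne').frequently

end LaplaceTransform

lemma StrictAntiOn.apply_div_le_apply_iff {f : ℝ → ℝ} (hf : StrictAntiOn f (Ici 0))
    {s e m : ℝ} (hs : 0 ≤ s) (he : 0 ≤ e) (hm : 0 < m) : f (e / m) ≤ f s ↔ s * m ≤ e := by
  rw [hf.le_iff_ge (div_nonneg he hm.le) hs, le_div_iff₀ hm]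

namespace ProbabilityTheory

lemma expMeasure_Iio_zero (r : ℝ) : expMeasure r (Iio 0) = 0 := by
  rw [expMeasure, gammaMeasure, withDensity_apply _ measurableSet_Iio]
  exact lintegral_gammaPDF_of_nonpos le_rfl

lemma expMeasure_Ici {r c : ℝ} (hr : 0 < r) (hc : 0 ≤ c) :
    expMeasure r (Ici c) = ENNReal.ofReal (Real.exp (-(r * c))) := by
  have := isProbabilityMeasure_expMeasure hr
  have : NullSingletonClass (expMeasure r) := by
    rw [expMeasure, gammaMeasure]; infer_instance
  have hcdf : 0 ≤ 1 - Real.exp (-(r * c)) :=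
    sub_nonneg.2 (Real.exp_le_one_iff.2 (by nlinarith))
  rw [← compl_Iio, prob_compl_eq_one_sub measurableSet_Iio, measure_congr Iio_ae_eq_Iic,
    ← ofReal_cdf, cdf_expMeasure_eq hr, if_pos hc, ← ENNReal.ofReal_one,
    ← ENNReal.ofReal_sub _ hcdf, sub_sub_cancel]

lemma ae_nonneg_of_map_eq_expMeasure {Ω : Type*} [MeasurableSpace Ω] {μ : Measure Ω}
    {E : Ω → ℝ} {r : ℝ} (hE : AEMeasurable E μ) (hlaw : μ.map E = expMeasure r) :
    ∀ᵐ ω ∂μ, 0 ≤ E ω := by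
  rw [← ae_map_iff hE measurableSet_Ici, hlaw, ae_iff]
  simp only [not_le]
  exact expMeasure_Iio_zero r

lemma iIndepFun.map_prodMk_prodMk {Ω β : Type*} [MeasurableSpace Ω]
    [MeasurableSpace β] {μ : Measure Ω} [IsProbabilityMeasure μ] {X Y Z : Ω → β}
    (h : iIndepFun ![X, Y, Z] μ) (hX : Measurable X) (hY : Measurable Y) (hZ : Measurable Z) :
    μ.map (fun ω ↦ ((X ω, Y ω), Z ω)) = ((μ.map X).prod (μ.map Y)).prod (μ.map Z) := by
  have hmeas : ∀ i, Measurable (![X, Y, Z] i) := by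
    intro i; fin_cases i <;> assumption
  have hXY : IndepFun X Y μ := h.indepFun (i := 0) (j := 1) (by decide)
  have hXYZ : IndepFun (fun ω ↦ (X ω, Y ω)) Z μ :=
    h.indepFun_prodMk hmeas 0 1 2 (by decide) (by decide)
  rw [hXYZ.map_prod_eq_prod_map_map (hX.prodMk hY).aemeasurable hZ.aemeasurable,
    hXY.map_prod_eq_prod_map_map hX.aemeasurable hY.aemeasurable]

lemma expMeasure_prod_prod_apply_setOf_mul_le {ρ : Measure ℝ} [SFinite ρ]
    (hρ : ∀ᵐ m ∂ρ, 0 ≤ m) {s₁ s₂ : ℝ} (hs₁ : 0 ≤ s₁) (hs₂ : 0 ≤ s₂) :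
    ((expMeasure 1).prod (expMeasure 1)).prod ρ {p | s₁ * p.2 ≤ p.1.1 ∧ s₂ * p.2 ≤ p.1.2} =
      ∫⁻ m, ENNReal.ofReal (Real.exp (-(s₁ + s₂) * m)) ∂ρ := by
  have := isProbabilityMeasure_expMeasure one_pos
  have hS : MeasurableSet {p : (ℝ × ℝ) × ℝ | s₁ * p.2 ≤ p.1.1 ∧ s₂ * p.2 ≤ p.1.2} := by
    measurability
  rw [Measure.prod_apply_symm hS]
  refine lintegral_congr_ae ?_
  filter_upwards [hρ] with m hm
  have hslice : (fun p : ℝ × ℝ ↦ (p, m)) ⁻¹' {p | s₁ * p.2 ≤ p.1.1 ∧ s₂ * p.2 ≤ p.1.2} =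
      Ici (s₁ * m) ×ˢ Ici (s₂ * m) := rfl
  rw [hslice, Measure.prod_prod, expMeasure_Ici one_pos (by positivity),
    expMeasure_Ici one_pos (by positivity), ← ENNReal.ofReal_mul (Real.exp_pos _).le,
    ← Real.exp_add]
  ring_nf

lemma measure_setOf_mul_le_and_mul_le {Ω : Type*} [MeasurableSpace Ω] {μ : Measure Ω}
    [IsProbabilityMeasure μ] {E₁ E₂ M : Ω → ℝ} (hindep : iIndepFun ![E₁, E₂, M] μ)
    (hE₁ : Measurable E₁) (hE₂ : Measurable E₂) (hM : Measurable M)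
    (hE₁law : μ.map E₁ = expMeasure 1) (hE₂law : μ.map E₂ = expMeasure 1)
    (hM₀ : ∀ᵐ ω ∂μ, 0 ≤ M ω) {s₁ s₂ : ℝ} (hs₁ : 0 ≤ s₁) (hs₂ : 0 ≤ s₂) :
    μ {ω | s₁ * M ω ≤ E₁ ω ∧ s₂ * M ω ≤ E₂ ω} =
      ∫⁻ ω, ENNReal.ofReal (Real.exp (-(s₁ + s₂) * M ω)) ∂μ := by
  have hS : MeasurableSet {p : (ℝ × ℝ) × ℝ | s₁ * p.2 ≤ p.1.1 ∧ s₂ * p.2 ≤ p.1.2} := by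
    measurability
  calc μ {ω | s₁ * M ω ≤ E₁ ω ∧ s₂ * M ω ≤ E₂ ω}
      = μ.map (fun ω ↦ ((E₁ ω, E₂ ω), M ω))
          {p | s₁ * p.2 ≤ p.1.1 ∧ s₂ * p.2 ≤ p.1.2} :=
        (Measure.map_apply ((hE₁.prodMk hE₂).prodMk hM) hS).symm
    _ = ∫⁻ m, ENNReal.ofReal (Real.exp (-(s₁ + s₂) * m)) ∂(μ.map M) := by
        rw [hindep.map_prodMk_prodMk hE₁ hE₂ hM, hE₁law, hE₂law,
          expMeasure_prod_prod_apply_setOf_mul_le ((ae_map_iff hM.aemeasurable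
            measurableSet_Ici).2 hM₀) hs₁ hs₂]
    _ = ∫⁻ ω, ENNReal.ofReal (Real.exp (-(s₁ + s₂) * M ω)) ∂μ :=
        lintegral_map (by fun_prop) hM

end ProbabilityTheory

/-- Marshall–Olkin sampling: if `φ` is the Laplace transform of an a.s. positive random
variable `M`, and `E₁, E₂` are i.i.d. `Exp(1)` random variables, jointly independent of `M`,
and `U_i = φ(E_i / M)`, then `P(U₁ ≤ u₁, U₂ ≤ u₂) = φ(φ⁻¹(u₁) + φ⁻¹(u₂))` for
`u₁, u₂ ∈ (0, 1]`, where `ψ = φ⁻¹` is the inverse of `φ` as a map `(0,1] → [0,∞)`. -/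
theorem marshall_olkin_joint_cdf
    {Ω : Type*} [MeasurableSpace Ω] (μ : Measure Ω) [IsProbabilityMeasure μ]
    (M E₁ E₂ : Ω → ℝ) (hM : Measurable M) (hMpos : ∀ᵐ ω ∂μ, 0 < M ω)
    (hE₁ : Measurable E₁) (hE₂ : Measurable E₂)
    (hE₁dist : Measure.map E₁ μ = expMeasure 1)
    (hE₂dist : Measure.map E₂ μ = expMeasure 1)
    (hindep : iIndepFun ![E₁, E₂, M] μ)
    (φ : ℝ → ℝ) (hφ : ∀ t, φ t = ∫ ω, Real.exp (-t * M ω) ∂μ)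
    (ψ : ℝ → ℝ)
    (hψ : ∀ u ∈ Set.Ioc (0 : ℝ) 1, ψ u ∈ Set.Ici (0 : ℝ) ∧ φ (ψ u) = u) :
    ∀ u₁ ∈ Set.Ioc (0 : ℝ) 1, ∀ u₂ ∈ Set.Ioc (0 : ℝ) 1,
      μ {ω | φ (E₁ ω / M ω) ≤ u₁ ∧ φ (E₂ ω / M ω) ≤ u₂} =
        ENNReal.ofReal (φ (ψ u₁ + ψ u₂)) := by
  intro u₁ hu₁ u₂ hu₂
  obtain ⟨hs₁, hφs₁⟩ := hψ u₁ hu₁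
  obtain ⟨hs₂, hφs₂⟩ := hψ u₂ hu₂
  generalize ψ u₁ = s₁ at hs₁ hφs₁ ⊢
  generalize ψ u₂ = s₂ at hs₂ hφs₂ ⊢
  subst hφs₁ hφs₂
  have hanti : StrictAntiOn φ (Ici 0) := by
    rw [funext hφ]
    exact strictAntiOn_integral_exp_neg_mul hM.aemeasurable hMpos
  have hevent : {ω | φ (E₁ ω / M ω) ≤ φ s₁ ∧ φ (E₂ ω / M ω) ≤ φ s₂} =ᵐ[μ]
      {ω | s₁ * M ω ≤ E₁ ω ∧ s₂ * M ω ≤ E₂ ω} := by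
    filter_upwards [hMpos, ae_nonneg_of_map_eq_expMeasure hE₁.aemeasurable hE₁dist,
      ae_nonneg_of_map_eq_expMeasure hE₂.aemeasurable hE₂dist] with ω hMω hE₁ω hE₂ω
    exact propext (and_congr (hanti.apply_div_le_apply_iff hs₁ hE₁ω hMω)
      (hanti.apply_div_le_apply_iff hs₂ hE₂ω hMω))
  have hM₀ : ∀ᵐ ω ∂μ, 0 ≤ M ω := hMpos.mono fun _ h ↦ h.le
  rw [measure_congr hevent,
    measure_setOf_mul_le_and_mul_le hindep hE₁ hE₂ hM hE₁dist hE₂dist hM₀ hs₁ hs₂, hφ,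
    ofReal_integral_eq_lintegral_ofReal
      (integrable_exp_neg_mul_of_ae_nonneg hM.aemeasurable hM₀ (add_nonneg hs₁ hs₂))
      (ae_of_all _ fun _ ↦ (Real.exp_pos _).le)]
end

section
/- If the mixing random variable M of an Archimedean copula is discrete with finite support contained in (0, ∞), then the copula C(u,v) = φ(φ^{−1}(u)+φ^{−1}(v)) with φ(t) = E[e^{−tM}] has zero upper tail dependence: lim_{u→1⁻} (C(u,u) − 2u + 1)/(1 − u) = 0. -/
/-!
Put `t = ψ u` and `p_k = e^{-β_k t} ∈ (0, 1]`. Then `u = Σ α_k p_k` and `C(u,u) = Σ α_k p_k²`, so,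
writing `x_k = α_k (1 - p_k) ≥ 0`,
`1 - u = Σ x_k` and `C(u,u) - 2u + 1 = Σ α_k (1 - p_k)² = Σ x_k² / α_k ≤ (1 - u)² Σ 1/α_k`.
Hence the ratio lies in `[0, (1 - u) Σ 1/α_k]` and tends to `0`.
-/

open Finset Filter Topology

section WeightedSums

variable {ι : Type*} (s : Finset ι) {w x : ι → ℝ}

theorem sum_mul_sq_le_sq_sum_mul_mul_sum_inv (hw : ∀ i ∈ s, 0 < w i) (hx : ∀ i ∈ s, 0 ≤ x i) :
    ∑ i ∈ s, w i * x i ^ 2 ≤ (∑ i ∈ s, w i * x i) ^ 2 * ∑ i ∈ s, (w i)⁻¹ := by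
  rw [mul_sum]
  refine sum_le_sum fun i hi => ?_
  have hwx : 0 ≤ w i * x i := mul_nonneg (hw i hi).le (hx i hi)
  have hle : w i * x i ≤ ∑ j ∈ s, w j * x j :=
    single_le_sum (fun j hj => mul_nonneg (hw j hj).le (hx j hj)) hi
  calc w i * x i ^ 2 = (w i * x i) ^ 2 * (w i)⁻¹ := by field_simp [(hw i hi).ne']
    _ ≤ (∑ j ∈ s, w j * x j) ^ 2 * (w i)⁻¹ :=
      mul_le_mul_of_nonneg_right (pow_le_pow_left₀ hwx hle 2) (inv_nonneg.2 (hw i hi).le)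

theorem one_sub_sum_mul_eq_sum_mul_one_sub (hw : ∑ i ∈ s, w i = 1) :
    1 - ∑ i ∈ s, w i * x i = ∑ i ∈ s, w i * (1 - x i) := by
  simp only [mul_sub, mul_one, sum_sub_distrib, hw]

theorem sum_mul_sq_sub_two_mul_sum_mul_add_one (hw : ∑ i ∈ s, w i = 1) :
    ∑ i ∈ s, w i * x i ^ 2 - 2 * ∑ i ∈ s, w i * x i + 1 = ∑ i ∈ s, w i * (1 - x i) ^ 2 := by
  have hsq : ∀ i, w i * (1 - x i) ^ 2 = w i * x i ^ 2 - 2 * (w i * x i) + w i := fun i => by ring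
  simp only [hsq, sum_add_distrib, sum_sub_distrib, ← mul_sum, hw]

end WeightedSums

section Mixture

variable {ι : Type*} (s : Finset ι) {α p : ι → ℝ} {u : ℝ}

theorem mixture_tail_ratio_nonneg (hα : ∀ i ∈ s, 0 ≤ α i) (hsum : ∑ i ∈ s, α i = 1)
    (hp : ∀ i ∈ s, p i ≤ 1) (hu : ∑ i ∈ s, α i * p i = u) :
    0 ≤ (∑ i ∈ s, α i * p i ^ 2 - 2 * u + 1) / (1 - u) := by
  subst hu
  rw [sum_mul_sq_sub_two_mul_sum_mul_add_one s hsum, one_sub_sum_mul_eq_sum_mul_one_sub s hsum]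
  exact div_nonneg (sum_nonneg fun i hi => mul_nonneg (hα i hi) (sq_nonneg _))
    (sum_nonneg fun i hi => mul_nonneg (hα i hi) (sub_nonneg.2 (hp i hi)))

theorem mixture_tail_ratio_le (hα : ∀ i ∈ s, 0 < α i) (hsum : ∑ i ∈ s, α i = 1)
    (hp : ∀ i ∈ s, p i ≤ 1) (hu : ∑ i ∈ s, α i * p i = u) :
    (∑ i ∈ s, α i * p i ^ 2 - 2 * u + 1) / (1 - u) ≤ (1 - u) * ∑ i ∈ s, (α i)⁻¹ := by
  subst hu
  have hq : ∀ i ∈ s, 0 ≤ 1 - p i := fun i hi => sub_nonneg.2 (hp i hi)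
  rw [sum_mul_sq_sub_two_mul_sum_mul_add_one s hsum, one_sub_sum_mul_eq_sum_mul_one_sub s hsum]
  refine div_le_of_le_mul₀ (sum_nonneg fun i hi => mul_nonneg (hα i hi).le (hq i hi))
    (mul_nonneg (sum_nonneg fun i hi => mul_nonneg (hα i hi).le (hq i hi))
      (sum_nonneg fun i hi => (inv_pos.2 (hα i hi)).le)) ?_
  calc ∑ i ∈ s, α i * (1 - p i) ^ 2
      ≤ (∑ i ∈ s, α i * (1 - p i)) ^ 2 * ∑ i ∈ s, (α i)⁻¹ :=
        sum_mul_sq_le_sq_sum_mul_mul_sum_inv s hα hq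
    _ = _ := by ring

end Mixture

/-- If the mixing variable `M` of an Archimedean copula is discrete with finite support
contained in `(0, ∞)` (so `φ(t) = Σ_k α_k e^{−β_k t}` with `β_k > 0`, `α_k > 0`, `Σ α_k = 1`),
then the copula `C(u,v) = φ(ψ(u) + ψ(v))` has zero upper tail dependence:
`lim_{u→1⁻} (C(u,u) − 2u + 1)/(1 − u) = 0`. -/
theorem archimedean_copula_zero_upper_tail_dependence
    (K : ℕ) (α β : Fin K → ℝ)
    (hα : ∀ k, 0 < α k) (hαsum : ∑ k, α k = 1) (hβ : ∀ k, 0 < β k)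
    (φ : ℝ → ℝ) (hφ : ∀ t, φ t = ∑ k, α k * Real.exp (-(β k) * t))
    (ψ : ℝ → ℝ)
    (hψ : ∀ u ∈ Set.Ioc (0 : ℝ) 1, ψ u ∈ Set.Ici (0 : ℝ) ∧ φ (ψ u) = u)
    (C : ℝ → ℝ → ℝ)
    (hC : ∀ u ∈ Set.Ioc (0 : ℝ) 1, ∀ v ∈ Set.Ioc (0 : ℝ) 1, C u v = φ (ψ u + ψ v)) :
    Filter.Tendsto (fun u => (C u u - 2 * u + 1) / (1 - u))
      (nhdsWithin 1 (Set.Ioo 0 1)) (nhds 0) := by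
  have hbounds : ∀ u ∈ Set.Ioo (0 : ℝ) 1, 0 ≤ (C u u - 2 * u + 1) / (1 - u) ∧
      (C u u - 2 * u + 1) / (1 - u) ≤ (1 - u) * ∑ k, (α k)⁻¹ := by
    intro u hu
    have hu' := Set.Ioo_subset_Ioc_self hu
    obtain ⟨ht, hφψ⟩ := hψ u hu'
    have hp : ∀ k ∈ univ, Real.exp (-(β k) * ψ u) ≤ 1 := fun k _ =>
      Real.exp_le_one_iff.2 (mul_nonpos_of_nonpos_of_nonneg (neg_nonpos.2 (hβ k).le) ht)
    have hu_eq : ∑ k, α k * Real.exp (-(β k) * ψ u) = u := (hφ _).symm.trans hφψ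
    have hCuu : C u u = ∑ k, α k * Real.exp (-(β k) * ψ u) ^ 2 := by
      rw [hC u hu' u hu', hφ]
      exact sum_congr rfl fun k _ => by rw [sq, ← Real.exp_add, mul_add]
    rw [hCuu]
    exact ⟨mixture_tail_ratio_nonneg univ (fun k _ => (hα k).le) hαsum hp hu_eq,
      mixture_tail_ratio_le univ (fun k _ => hα k) hαsum hp hu_eq⟩
  have hlim : Tendsto (fun u : ℝ => (1 - u) * ∑ k, (α k)⁻¹) (𝓝[Set.Ioo 0 1] 1) (𝓝 0) := by
    have hcont : Continuous fun u : ℝ => (1 - u) * ∑ k, (α k)⁻¹ := by fun_prop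
    simpa using (hcont.tendsto 1).mono_left nhdsWithin_le_nhds
  exact tendsto_of_tendsto_of_tendsto_of_le_of_le' tendsto_const_nhds hlim
    (eventually_nhdsWithin_of_forall fun u hu => (hbounds u hu).1)
    (eventually_nhdsWithin_of_forall fun u hu => (hbounds u hu).2)
end

section
/- If the mixing random variable M of an Archimedean copula is bounded away from zero (there exists ε > 0 with P(M < ε) = 0), then the copula has zero lower tail dependence: lim_{u→0⁺} C(u,u)/u = 0, where C(u,v) = φ(φ^{−1}(u)+φ^{−1}(v)) and φ(t) = E[e^{−tM}]. -/
/-!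
If `M ≥ ε` almost surely then `φ(2s) = E[e^{-sM} e^{-sM}] ≤ e^{-εs} φ(s)`, so with `s = ψ(u)`,
`C(u,u)/u = φ(2ψ(u))/φ(ψ(u)) ≤ e^{-εψ(u)}`. Since `φ` is positive, `ψ(u) → ∞` as `u → 0⁺`,
and the bound tends to `0`.
-/

open MeasureTheory Filter Set Real Topology

namespace ProbabilityTheory

variable {Ω : Type*} [MeasurableSpace Ω] {μ : Measure Ω} {X : Ω → ℝ}

lemma integrable_exp_mul_of_nonpos_of_ae_ge [IsFiniteMeasure μ] {t a : ℝ} (ht : t ≤ 0)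
    (hX : AEMeasurable X μ) (ha : ∀ᵐ ω ∂μ, a ≤ X ω) :
    Integrable (fun ω ↦ exp (t * X ω)) μ := by
  simpa only [neg_mul_neg] using
    integrable_exp_mul_of_le (X := fun ω ↦ -X ω) (-t) (-a) (neg_nonneg.2 ht) hX.neg
      (by filter_upwards [ha] with ω hω using neg_le_neg hω)

lemma mgf_sub_le_exp_mul_mgf {t s ε : ℝ} (hs : 0 ≤ s) (hε : ∀ᵐ ω ∂μ, ε ≤ X ω)
    (hint : Integrable (fun ω ↦ exp (t * X ω)) μ) :
    mgf X μ (t - s) ≤ exp (-(s * ε)) * mgf X μ t := by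
  rw [mgf, mgf, ← integral_const_mul]
  refine integral_mono_of_nonneg (ae_of_all _ fun ω ↦ (exp_pos _).le) (hint.const_mul _) ?_
  filter_upwards [hε] with ω hω
  rw [← exp_add, exp_le_exp]
  nlinarith

lemma antitoneOn_mgf_neg [IsFiniteMeasure μ] (hX : AEMeasurable X μ) (h0 : 0 ≤ᵐ[μ] X) :
    AntitoneOn (fun t ↦ mgf X μ (-t)) (Ici 0) := by
  intro s hs t _ hst
  have hint : Integrable (fun ω ↦ exp (-s * X ω)) μ :=
    integrable_exp_mul_of_nonpos_of_ae_ge (neg_nonpos.2 hs) hX h0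
  have h := mgf_sub_le_exp_mul_mgf (t := -s) (ε := 0) (sub_nonneg.2 hst) h0 hint
  rwa [mul_zero, neg_zero, exp_zero, one_mul, neg_sub_left, sub_add_cancel] at h

end ProbabilityTheory

lemma tendsto_atTop_nhdsGT_zero_of_rightInverse {φ ψ : ℝ → ℝ} (hanti : AntitoneOn φ (Ici 0))
    (hpos : ∀ t, 0 ≤ t → 0 < φ t) (hψ : ∀ᶠ u in 𝓝[>] 0, 0 ≤ ψ u ∧ φ (ψ u) = u) :
    Tendsto ψ (𝓝[>] 0) atTop := by
  refine tendsto_atTop.2 fun T ↦ ?_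
  have hT : 0 ≤ max T 0 := le_max_right _ _
  have hsmall : ∀ᶠ u in 𝓝[>] (0 : ℝ), u < φ (max T 0) :=
    nhdsWithin_le_nhds (gt_mem_nhds (hpos _ hT))
  filter_upwards [hψ, hsmall] with u ⟨hψ0, hφψ⟩ hu
  by_contra! hlt
  have := hanti hψ0 hT ((hlt.trans_le (le_max_left _ _)).le)
  linarith

open ProbabilityTheory in
/-- If the mixing variable `M` of an Archimedean copula is bounded away from zero
(there is `ε > 0` with `P(M < ε) = 0`), then the copula `C(u,v) = φ(ψ(u) + ψ(v))`, where
`φ(t) = E[e^{−tM}]` and `ψ` is the inverse of `φ` on `(0, 1]`, has zero lower tail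
dependence: `lim_{u→0⁺} C(u,u)/u = 0`. -/
theorem archimedean_copula_zero_lower_tail_dependence
    {Ω : Type*} [MeasurableSpace Ω] (μ : Measure Ω) [IsProbabilityMeasure μ]
    (M : Ω → ℝ) (hM : Measurable M)
    (ε : ℝ) (hε : 0 < ε) (hMε : μ {ω | M ω < ε} = 0)
    (φ : ℝ → ℝ) (hφ : ∀ t, φ t = ∫ ω, Real.exp (-t * M ω) ∂μ)
    (ψ : ℝ → ℝ)
    (hψ : ∀ u ∈ Set.Ioc (0 : ℝ) 1, ψ u ∈ Set.Ici (0 : ℝ) ∧ φ (ψ u) = u)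
    (C : ℝ → ℝ → ℝ)
    (hC : ∀ u ∈ Set.Ioc (0 : ℝ) 1, ∀ v ∈ Set.Ioc (0 : ℝ) 1, C u v = φ (ψ u + ψ v)) :
    Filter.Tendsto (fun u => C u u / u) (nhdsWithin 0 (Set.Ioi 0)) (nhds 0) := by
  have hMε' : ∀ᵐ ω ∂μ, ε ≤ M ω := by simpa [ae_iff] using hMε
  have hM0 : 0 ≤ᵐ[μ] M := by filter_upwards [hMε'] with ω hω using hε.le.trans hω
  have hφ_eq : φ = fun t ↦ mgf M μ (-t) := funext hφ
  have hint : ∀ t, 0 ≤ t → Integrable (fun ω ↦ exp (-t * M ω)) μ := fun t ht ↦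
    integrable_exp_mul_of_nonpos_of_ae_ge (neg_nonpos.2 ht) hM.aemeasurable hM0
  have hIoc : ∀ᶠ u in 𝓝[>] (0 : ℝ), u ∈ Ioc 0 1 := Ioc_mem_nhdsGT one_pos
  have hψ_top : Tendsto ψ (𝓝[>] 0) atTop := by
    refine tendsto_atTop_nhdsGT_zero_of_rightInverse ?_ ?_ (hIoc.mono fun u hu ↦ hψ u hu)
    · exact hφ_eq ▸ antitoneOn_mgf_neg hM.aemeasurable hM0
    · exact fun t ht ↦ hφ_eq ▸ mgf_pos (hint t ht)
  have hbound : ∀ᶠ u in 𝓝[>] (0 : ℝ), C u u / u ∈ Icc 0 (exp (-(ψ u * ε))) := by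
    filter_upwards [hIoc] with u hu
    obtain ⟨hψ0, hφψ⟩ := hψ u hu
    have hdouble : φ (ψ u + ψ u) ≤ exp (-(ψ u * ε)) * φ (ψ u) := by
      simpa only [hφ_eq, neg_add'] using mgf_sub_le_exp_mul_mgf hψ0 hMε' (hint _ hψ0)
    rw [hC u hu u hu, mem_Icc, div_le_iff₀ hu.1]
    exact ⟨div_nonneg (hφ_eq ▸ mgf_nonneg) hu.1.le, hdouble.trans_eq (by rw [hφψ])⟩
  have hexp : Tendsto (fun u ↦ exp (-(ψ u * ε))) (𝓝[>] 0) (𝓝 0) :=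
    tendsto_exp_atBot.comp (tendsto_neg_atTop_atBot.comp (hψ_top.atTop_mul_const hε))
  exact tendsto_of_tendsto_of_tendsto_of_le_of_le' tendsto_const_nhds hexp
    (hbound.mono fun _ h ↦ h.1) (hbound.mono fun _ h ↦ h.2)
end
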